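/- Let f = P/Q be a nonzero rational function in k(x,y) with P, Q in k[x,y], Q ≠ 0, deg_x(P) ≤ d_x, deg_x(Q) ≤ d_x, deg_y(P) ≤ d_y, deg_y(Q) ≤ d_y, and d_y ≥ 1. Set κ = 3·d_x·d_y and ν = 6·d_y. Then there exists a family (c_{i,j,ℓ}) of elements of k, indexed by triples (i,j,ℓ) of natural numbers with i ≤ κ and j + ℓ ≤ ν and not all zero, such that Σ_{i ≤ κ, j+ℓ ≤ ν} c_{i,j,ℓ}·x^i·D_x^j(D_y^ℓ(f)) = 0 in k(x,y). -/

import Mathlib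

open Polynomial

noncomputable section

/-- A map is a derivation: it is additive and satisfies the Leibniz rule. -/
def IsDeriv {F : Type*} [CommRing F] (D : F → F) : Prop :=
  (∀ a b, D (a + b) = D a + D b) ∧ ∀ a b, D (a * b) = a * D b + b * D a

/-- Degree in `x` of an element of `k[x][y]` (inner variable `x`, outer variable `y`). -/
def degX {k : Type*} [Field k] (Q : Polynomial (Polynomial k)) : ℕ :=
  Q.support.sup fun i => (Q.coeff i).natDegree

/-- Partial derivative with respect to `x` on `k[x][y]`. -/
def derivX {k : Type*} [Field k] (Q : Polynomial (Polynomial k)) : Polynomial (Polynomial k) :=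
  Q.sum fun i a => Polynomial.C (Polynomial.derivative a) * Polynomial.X ^ i

/-- The embedding `k[x][y] → k(x)(y)`. -/
def toF {k : Type*} [Field k] : Polynomial (Polynomial k) →+* RatFunc (RatFunc k) :=
  (algebraMap (Polynomial (RatFunc k)) (RatFunc (RatFunc k))).comp
    (Polynomial.mapRingHom (algebraMap (Polynomial k) (RatFunc k)))

/-- The embedding `k(x) → k(x)(y)`. -/
def ratToF {k : Type*} [Field k] : RatFunc k →+* RatFunc (RatFunc k) :=
  (algebraMap (Polynomial (RatFunc k)) (RatFunc (RatFunc k))).comp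
    (Polynomial.C : RatFunc k →+* Polynomial (RatFunc k))

/-- The embedding `k(x)[y] → k(x)(y)`. -/
def kyToF {k : Type*} [Field k] : Polynomial (RatFunc k) →+* RatFunc (RatFunc k) :=
  algebraMap (Polynomial (RatFunc k)) (RatFunc (RatFunc k))

/-- The embedding `k[x][y] → k(x)[y]`. -/
def toKy {k : Type*} [Field k] : Polynomial (Polynomial k) →+* Polynomial (RatFunc k) :=
  Polynomial.mapRingHom (algebraMap (Polynomial k) (RatFunc k))

/-- The embedding `k[y] → k[x][y]` (a polynomial in `y` viewed in `k[x][y]`). -/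
def yToXY {k : Type*} [Field k] : Polynomial k →+* Polynomial (Polynomial k) :=
  Polynomial.mapRingHom (Polynomial.C : k →+* Polynomial k)

/-- The Hermite matrix associated with a factorisation `Q = Qs * Qneg`, with respect to the
monomial bases: its columns are the coefficient vectors (in `y`, coefficients in `k[x]`) of
`Qs * D_y(y^j) - E * y^j` for `j < dm` (where `E = Qs * D_y(Qneg) / Qneg`) and of
`Qneg * y^j` for `j < dy - dm`. -/
def hermiteMat {k : Type*} [Field k] (Qs Qneg E : Polynomial (Polynomial k)) (dy dm : ℕ) :
    Matrix (Fin dy) (Fin dy) (Polynomial k) :=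
  Matrix.of fun i j =>
    if (j : ℕ) < dm then
      (Qs * Polynomial.derivative (Polynomial.X ^ (j : ℕ)) - E * Polynomial.X ^ (j : ℕ)).coeff i
    else
      (Qneg * Polynomial.X ^ ((j : ℕ) - dm)).coeff i

/-! If `g · Q ^ n` is a polynomial `A`, then for a derivation `D` that preserves polynomials
without raising their bidegree, `D g · Q ^ (n + 1) = Q · D A - n · D Q · A`. Starting from
`f · Q = P`, every `x ^ i · D_x ^ j (D_y ^ ℓ f)` with `i ≤ κ`, `j + ℓ ≤ ν` is therefore
`B / Q ^ (ν + 1)` with `B` of bidegree at most `(κ + (ν + 1) d_x, (ν + 1) d_y)`. These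
numerators live in a `k`-space of dimension `(κ + (ν + 1) d_x + 1) ((ν + 1) d_y + 1)`, which for
`κ = 3 d_x d_y`, `ν = 6 d_y` is smaller than the number `(κ + 1) (ν + 1) (ν + 2) / 2` of such
functions, so they are linearly dependent over `k`. -/

section DegX
variable {k : Type*} [Field k]

lemma degX_le_iff {B : k[X][X]} {n : ℕ} :
    degX B ≤ n ↔ ∀ i, (B.coeff i).natDegree ≤ n := by
  refine Finset.sup_le_iff.trans ⟨fun h i => ?_, fun h i _ => h i⟩
  by_cases hi : i ∈ B.support
  · exact h i hi
  · simp [notMem_support_iff.mp hi]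

lemma natDegree_coeff_le_degX (B : k[X][X]) (i : ℕ) : (B.coeff i).natDegree ≤ degX B :=
  degX_le_iff.mp le_rfl i

lemma degX_sub_le (A B : k[X][X]) : degX (A - B) ≤ max (degX A) (degX B) :=
  degX_le_iff.mpr fun i => by
    rw [coeff_sub]
    exact (natDegree_sub_le _ _).trans
      (max_le_max (natDegree_coeff_le_degX A i) (natDegree_coeff_le_degX B i))

lemma degX_mul_le (A B : k[X][X]) : degX (A * B) ≤ degX A + degX B :=
  degX_le_iff.mpr fun i => by
    rw [coeff_mul]
    exact natDegree_sum_le_of_forall_le _ _ fun p _ => natDegree_mul_le.trans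
      (add_le_add (natDegree_coeff_le_degX A p.1) (natDegree_coeff_le_degX B p.2))

lemma degX_C_le (p : k[X]) : degX (C p) ≤ p.natDegree :=
  degX_le_iff.mpr fun i => by rw [coeff_C]; split_ifs <;> simp

lemma degX_pow_le (B : k[X][X]) (n : ℕ) : degX (B ^ n) ≤ n * degX B := by
  induction n with
  | zero => simpa using degX_C_le (1 : k[X])
  | succ n ih =>
    rw [pow_succ, Nat.succ_mul]
    exact (degX_mul_le _ _).trans (Nat.add_le_add_right ih _)

lemma degX_natCast_mul_le (n : ℕ) (B : k[X][X]) : degX ((n : k[X][X]) * B) ≤ degX B :=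
  degX_le_iff.mpr fun i => by
    rw [← nsmul_eq_mul, coeff_smul]
    exact (natDegree_smul_le _ _).trans (natDegree_coeff_le_degX B i)

lemma natDegree_natCast_mul_le (n : ℕ) (B : k[X][X]) :
    ((n : k[X][X]) * B).natDegree ≤ B.natDegree := by
  rw [← nsmul_eq_mul]
  exact natDegree_smul_le _ _

lemma coeff_derivX (B : k[X][X]) (i : ℕ) : (derivX B).coeff i = derivative (B.coeff i) := by
  simp only [derivX, Polynomial.sum, finsetSum_coeff, coeff_C_mul_X_pow]
  rw [Finset.sum_ite_eq]
  split_ifs with hi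
  · rfl
  · simp [notMem_support_iff.mp hi]

lemma degX_derivX_le (B : k[X][X]) : degX (derivX B) ≤ degX B :=
  degX_le_iff.mpr fun i => by
    rw [coeff_derivX]
    exact (natDegree_derivative_le _).trans <| (Nat.sub_le _ _).trans (natDegree_coeff_le_degX B i)

lemma natDegree_derivX_le (B : k[X][X]) : (derivX B).natDegree ≤ B.natDegree :=
  natDegree_le_iff_coeff_eq_zero.mpr fun i hi => by
    rw [coeff_derivX, coeff_eq_zero_of_natDegree_lt hi, derivative_zero]

lemma degX_derivative_le (B : k[X][X]) : degX (derivative B) ≤ degX B :=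
  degX_le_iff.mpr fun i => by
    rw [coeff_derivative, mul_comm, ← Nat.cast_succ, ← nsmul_eq_mul]
    exact (natDegree_smul_le _ _).trans (natDegree_coeff_le_degX B _)

end DegX

namespace IsDeriv
variable {F : Type*} [CommRing F] {D : F → F}

lemma map_one (hD : IsDeriv D) : D 1 = 0 := by
  have h := hD.2 1 1
  rw [one_mul, one_mul] at h
  exact left_eq_add.mp h

lemma map_pow_mul_self (hD : IsDeriv D) (u : F) (n : ℕ) : D (u ^ n) * u = n * u ^ n * D u := by
  induction n with
  | zero => simp [hD.map_one]
  | succ n ih =>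
    rw [pow_succ, hD.2]
    push_cast
    linear_combination u * ih

lemma mul_pow_succ_eq (hD : IsDeriv D) {u g a : F} {n : ℕ} (h : g * u ^ n = a) :
    D g * u ^ (n + 1) = u * D a - n * D u * a := by
  have hDa := congrArg D h
  rw [hD.2] at hDa
  rw [← hDa, ← h]
  linear_combination (-g) * hD.map_pow_mul_self u n
end IsDeriv

lemma derivative_toF_of_kyToF {k : Type*} [Field k]
    {D : RatFunc (RatFunc k) → RatFunc (RatFunc k)}
    (hD : ∀ A : Polynomial (RatFunc k), D (kyToF A) = kyToF (derivative A)) (A : k[X][X]) :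
    D (toF A) = toF (derivative A) := by
  change D (kyToF (toKy A)) = kyToF (toKy (derivative A))
  rw [hD, toKy, coe_mapRingHom, derivative_map]

lemma toF_injective {k : Type*} [Field k] : Function.Injective (toF (k := k)) :=
  (IsFractionRing.injective _ _).comp
    (map_injective _ (IsFractionRing.injective (Polynomial k) (RatFunc k)))

lemma toF_ne_zero {k : Type*} [Field k] {Q : k[X][X]} (hQ : Q ≠ 0) : toF Q ≠ 0 :=
  (map_ne_zero_iff _ toF_injective).mpr hQ

section Numerator
variable {k : Type*} [Field k]

def NumeratorBidegLE (Q : k[X][X]) (n a b : ℕ) (g : RatFunc (RatFunc k)) : Prop :=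
  ∃ A : k[X][X], degX A ≤ a ∧ A.natDegree ≤ b ∧ g * toF Q ^ n = toF A

namespace NumeratorBidegLE
variable {Q : k[X][X]} {n a b dx dy : ℕ} {g : RatFunc (RatFunc k)}

lemma mono {a' b' : ℕ} (ha : a ≤ a') (hb : b ≤ b') (h : NumeratorBidegLE Q n a b g) :
    NumeratorBidegLE Q n a' b' g :=
  let ⟨A, hAx, hAy, hg⟩ := h
  ⟨A, hAx.trans ha, hAy.trans hb, hg⟩

lemma div (P : k[X][X]) (hQ : Q ≠ 0) :
    NumeratorBidegLE Q 1 (degX P) P.natDegree (toF P / toF Q) :=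
  ⟨P, le_rfl, le_rfl, by rw [pow_one, div_mul_cancel₀ _ (toF_ne_zero hQ)]⟩

lemma X_pow_mul (i : ℕ) (h : NumeratorBidegLE Q n a b g) :
    NumeratorBidegLE Q n (a + i) b (toF (C X) ^ i * g) := by
  obtain ⟨A, hAx, hAy, hg⟩ := h
  refine ⟨C X ^ i * A, ?_, ?_, by rw [map_mul, map_pow, ← hg, mul_assoc]⟩
  · calc degX (C X ^ i * A) ≤ i * degX (C (X : k[X])) + degX A :=
          (degX_mul_le _ _).trans (Nat.add_le_add_right (degX_pow_le _ _) _)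
      _ ≤ a + i := by
          have := (degX_C_le (X : k[X])).trans natDegree_X_le
          nlinarith
  · rw [← C_pow]
    exact (natDegree_C_mul_le _ _).trans hAy

lemma mul_pow (hQdx : degX Q ≤ dx) (hQdy : Q.natDegree ≤ dy) (m : ℕ)
    (h : NumeratorBidegLE Q n a b g) :
    NumeratorBidegLE Q (n + m) (a + m * dx) (b + m * dy) g := by
  obtain ⟨A, hAx, hAy, hg⟩ := h
  refine ⟨A * Q ^ m, ?_, ?_, by rw [pow_add, ← mul_assoc, hg, map_mul, map_pow]⟩
  · exact (degX_mul_le _ _).trans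
      (add_le_add hAx ((degX_pow_le _ _).trans (Nat.mul_le_mul_left _ hQdx)))
  · exact natDegree_mul_le.trans
      (add_le_add hAy (natDegree_pow_le.trans (Nat.mul_le_mul_left _ hQdy)))

variable {D : RatFunc (RatFunc k) → RatFunc (RatFunc k)} {d : k[X][X] → k[X][X]}

lemma derivation (hQdx : degX Q ≤ dx) (hQdy : Q.natDegree ≤ dy) (hD : IsDeriv D)
    (hDd : ∀ A, D (toF A) = toF (d A))
    (hdx : ∀ A, degX (d A) ≤ degX A) (hdy : ∀ A, (d A).natDegree ≤ A.natDegree)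
    (h : NumeratorBidegLE Q n a b g) :
    NumeratorBidegLE Q (n + 1) (a + dx) (b + dy) (D g) := by
  obtain ⟨A, hAx, hAy, hg⟩ := h
  refine ⟨Q * d A - n * d Q * A, ?_, ?_, ?_⟩
  · refine (degX_sub_le _ _).trans (max_le ?_ ?_)
    · exact (degX_mul_le _ _).trans (by linarith [hdx A])
    · rw [mul_assoc]
      exact (degX_natCast_mul_le _ _).trans <| (degX_mul_le _ _).trans (by linarith [hdx Q])
  · refine (natDegree_sub_le _ _).trans (max_le ?_ ?_)
    · exact natDegree_mul_le.trans (by linarith [hdy A])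
    · rw [mul_assoc]
      exact (natDegree_natCast_mul_le _ _).trans <| natDegree_mul_le.trans (by linarith [hdy Q])
  · rw [hD.mul_pow_succ_eq hg]
    simp [hDd]

lemma derivation_iterate (hQdx : degX Q ≤ dx) (hQdy : Q.natDegree ≤ dy) (hD : IsDeriv D)
    (hDd : ∀ A, D (toF A) = toF (d A))
    (hdx : ∀ A, degX (d A) ≤ degX A) (hdy : ∀ A, (d A).natDegree ≤ A.natDegree)
    (h : NumeratorBidegLE Q n a b g) (j : ℕ) :
    NumeratorBidegLE Q (n + j) (a + j * dx) (b + j * dy) (D^[j] g) := by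
  induction j with
  | zero => simpa using h
  | succ j ih =>
    rw [Function.iterate_succ_apply']
    convert ih.derivation hQdx hQdy hD hDd hdx hdy using 1 <;> ring

end NumeratorBidegLE
end Numerator

lemma exists_nontrivial_relation_of_mem_span_range {K M ι κ : Type*} [Field K] [AddCommGroup M]
    [Module K M] [Fintype κ] {s : Finset ι} {t : κ → M} {v : ι → M}
    (hv : ∀ i ∈ s, v i ∈ Submodule.span K (Set.range t)) (hcard : Fintype.card κ < s.card) :
    ∃ c : ι → K, (∃ i ∈ s, c i ≠ 0) ∧ ∑ i ∈ s, c i • v i = 0 := by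
  classical
  have : Module.Finite K (Submodule.span K (Set.range t)) :=
    FiniteDimensional.span_of_finite K (Set.finite_range t)
  have hdep : ¬ LinearIndependent K
      fun i : s => (⟨v i, hv i i.2⟩ : Submodule.span K (Set.range t)) := fun hli => by
    have := hli.fintype_card_le_finrank.trans (finrank_range_le_card t)
    simp only [Fintype.card_coe] at this
    omega
  obtain ⟨g, hg, i, hi⟩ := Fintype.not_linearIndependent_iff.mp hdep
  refine ⟨fun j => if h : j ∈ s then g ⟨j, h⟩ else 0, ⟨i, i.2, by simpa using hi⟩, ?_⟩
  rw [← Finset.sum_attach]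
  simpa using congrArg Subtype.val hg

section Monomials
variable {k : Type*} [Field k]

def bidegMonomial {a b : ℕ} (p : ↥(Finset.range (a + 1) ×ˢ Finset.range (b + 1))) : k[X][X] :=
  monomial p.1.2 (monomial p.1.1 1)

lemma mem_span_bidegMonomial {a b : ℕ} {B : k[X][X]} (ha : degX B ≤ a)
    (hb : B.natDegree ≤ b) :
    B ∈ Submodule.span k (Set.range (bidegMonomial (a := a) (b := b))) := by
  rw [B.as_sum_range' (b + 1) (Nat.lt_succ_of_le hb)]
  refine Submodule.sum_mem _ fun j hj => ?_
  rw [(B.coeff j).as_sum_range' (a + 1)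
    (Nat.lt_succ_of_le ((natDegree_coeff_le_degX B j).trans ha)), map_sum]
  refine Submodule.sum_mem _ fun i hi => ?_
  rw [← mul_one ((B.coeff j).coeff i), ← smul_eq_mul, ← smul_monomial, ← smul_monomial]
  exact Submodule.smul_mem _ _
    (Submodule.subset_span ⟨⟨(i, j), Finset.mem_product.mpr ⟨hi, hj⟩⟩, rfl⟩)

lemma smul_eq_C_C_mul (c : k) (B : k[X][X]) : c • B = C (C c) * B := by
  rw [← smul_eq_C_mul, ← algebraMap_eq, algebraMap_smul]

end Monomials

lemma NumeratorBidegLE.exists_relation {k ι : Type*} [Field k] {Q : k[X][X]} {n a b : ℕ}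
    {s : Finset ι} {v : ι → RatFunc (RatFunc k)} (hQ : Q ≠ 0)
    (hv : ∀ i ∈ s, NumeratorBidegLE Q n a b (v i)) (hcard : (a + 1) * (b + 1) < s.card) :
    ∃ c : ι → k, (∃ i ∈ s, c i ≠ 0) ∧ ∑ i ∈ s, toF (C (C (c i))) * v i = 0 := by
  choose! A hAa hAb hA using hv
  obtain ⟨c, hc0, hc⟩ := exists_nontrivial_relation_of_mem_span_range (K := k)
    (fun i hi => mem_span_bidegMonomial (hAa i hi) (hAb i hi)) (by simpa using hcard)
  refine ⟨c, hc0, ?_⟩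
  have hsum : (∑ i ∈ s, toF (C (C (c i))) * v i) * toF Q ^ n = 0 := by
    rw [← map_zero toF, ← hc, map_sum, Finset.sum_mul]
    refine Finset.sum_congr rfl fun i hi => ?_
    rw [smul_eq_C_C_mul, map_mul, ← hA i hi, mul_assoc]
  exact (mul_eq_zero.mp hsum).resolve_right (pow_ne_zero _ (toF_ne_zero hQ))

lemma card_filter_add_le_mul_two (n : ℕ) :
    ((Finset.range (n + 1) ×ˢ Finset.range (n + 1)).filter fun p => p.1 + p.2 ≤ n).card * 2 =
      (n + 1) * (n + 2) := by
  have h : ((Finset.range (n + 1) ×ˢ Finset.range (n + 1)).filter fun p => p.1 + p.2 ≤ n) =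
      (Finset.range (n + 1)).biUnion Finset.HasAntidiagonal.antidiagonal := by
    ext ⟨j, ℓ⟩
    simp only [Finset.mem_filter, Finset.mem_product, Finset.mem_range, Finset.mem_biUnion,
      Finset.HasAntidiagonal.mem_antidiagonal]
    exact ⟨fun h => ⟨j + ℓ, by omega, rfl⟩, fun ⟨m, hm, hme⟩ => by omega⟩
  rw [h, Finset.card_biUnion fun m _ m' _ hm => Finset.disjoint_left.mpr fun p hp hp' => hm <| by
    rw [Finset.HasAntidiagonal.mem_antidiagonal] at hp hp'; omega]
  simp only [Finset.Nat.card_antidiagonal]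
  rw [Finset.sum_add_distrib, add_mul, Finset.sum_range_id_mul_two]
  simp only [Finset.sum_const, Finset.card_range, smul_eq_mul, Nat.add_sub_cancel]
  ring

lemma card_filter_le_and_add_le_mul_two (κ ν : ℕ) :
    ((Finset.range (κ + 1) ×ˢ Finset.range (ν + 1) ×ˢ Finset.range (ν + 1)).filter
      fun w => w.1 ≤ κ ∧ w.2.1 + w.2.2 ≤ ν).card * 2 =
      (κ + 1) * ((ν + 1) * (ν + 2)) := by
  have h : ((Finset.range (κ + 1) ×ˢ Finset.range (ν + 1) ×ˢ Finset.range (ν + 1)).filter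
      fun w => w.1 ≤ κ ∧ w.2.1 + w.2.2 ≤ ν) = Finset.range (κ + 1) ×ˢ
        ((Finset.range (ν + 1) ×ˢ Finset.range (ν + 1)).filter fun p => p.1 + p.2 ≤ ν) := by
    ext ⟨i, j, ℓ⟩
    simp only [Finset.mem_filter, Finset.mem_product, Finset.mem_range]
    omega
  rw [h, Finset.card_product, Finset.card_range, mul_assoc, card_filter_add_le_mul_two]

theorem stmt_18_general {k : Type*} [Field k]
    (P Q : Polynomial (Polynomial k))
    (hQ : Q ≠ 0)
    (dx dy : ℕ) (hdy : 1 ≤ dy)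
    (hPdx : degX P ≤ dx) (hQdx : degX Q ≤ dx)
    (hPdy : P.natDegree ≤ dy) (hQdy : Q.natDegree ≤ dy)
    (Dy : RatFunc (RatFunc k) → RatFunc (RatFunc k)) (hDy : IsDeriv Dy)
    (hDyval : ∀ A : Polynomial (RatFunc k), Dy (kyToF A) = kyToF (Polynomial.derivative A))
    (Dx : RatFunc (RatFunc k) → RatFunc (RatFunc k)) (hDx : IsDeriv Dx)
    (hDxval : ∀ A : Polynomial (Polynomial k), Dx (toF A) = toF (derivX A))
    (κ ν : ℕ) (hκ : κ = 3 * dx * dy) (hν : ν = 6 * dy)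
    (S : Finset (ℕ × ℕ × ℕ))
    (hS : S = (Finset.range (κ + 1) ×ˢ Finset.range (ν + 1) ×ˢ
      Finset.range (ν + 1)).filter fun w => w.1 ≤ κ ∧ w.2.1 + w.2.2 ≤ ν) :
    ∃ c : ℕ × ℕ × ℕ → k,
      (∃ w ∈ S, c w ≠ 0) ∧
      ∑ w ∈ S, toF (Polynomial.C (Polynomial.C (c w))) *
        (toF (Polynomial.C Polynomial.X) ^ w.1 *
          Dx^[w.2.1] (Dy^[w.2.2] (toF P / toF Q))) = 0 := by
  have hf := (NumeratorBidegLE.div P hQ).mono hPdx hPdy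
  have hnum : ∀ w ∈ S, NumeratorBidegLE Q (ν + 1) (κ + (ν + 1) * dx) ((ν + 1) * dy)
      (toF (C X) ^ w.1 * Dx^[w.2.1] (Dy^[w.2.2] (toF P / toF Q))) := by
    rintro ⟨i, j, ℓ⟩ hw
    simp only [hS, Finset.mem_filter, Finset.mem_product, Finset.mem_range] at hw
    obtain ⟨m, hm⟩ : ∃ m, ν = ℓ + j + m := ⟨ν - (ℓ + j), by omega⟩
    have hy := hf.derivation_iterate hQdx hQdy hDy (derivative_toF_of_kyToF hDyval)
      degX_derivative_le (fun A => (natDegree_derivative_le A).trans (Nat.sub_le _ _)) ℓ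
    have hxy := hy.derivation_iterate hQdx hQdy hDx hDxval degX_derivX_le natDegree_derivX_le j
    have h := (hxy.mul_pow hQdx hQdy m).X_pow_mul i
    rw [hm, show ℓ + j + m + 1 = 1 + ℓ + j + m by ring]
    refine h.mono ?_ (le_of_eq (by ring))
    have : dx + ℓ * dx + j * dx + m * dx = (1 + ℓ + j + m) * dx := by ring
    omega
  refine NumeratorBidegLE.exists_relation hQ hnum ?_
  suffices (κ + (ν + 1) * dx + 1) * ((ν + 1) * dy + 1) * 2 < S.card * 2 by omega
  rw [hS, card_filter_le_and_add_le_mul_two, hκ, hν]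
  obtain ⟨e, rfl⟩ : ∃ e, dy = e + 1 := ⟨dy - 1, by omega⟩
  -- in terms of `dx` and `e`, the difference of the two sides has nonnegative coefficients
  ring_nf
  nlinarith [Nat.zero_le (dx * e), Nat.zero_le (dx * e * e)]

/-- the better filtration of `BCLSS2007`. For a nonzero `f = P/Q ∈ k(x,y)`
with `bideg(P), bideg(Q) ≤ (d_x, d_y)`, `d_y ≥ 1`, `κ = 3·d_x·d_y` and `ν = 6·d_y`, there is
a family `(c_{i,j,ℓ})` of elements of `k`, indexed by the triples with `i ≤ κ` and
`j + ℓ ≤ ν` and not all zero, such that `∑ c_{i,j,ℓ}·x^i·D_x^j(D_y^ℓ(f)) = 0`. -/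
theorem stmt_18 {k : Type*} [Field k] [CharZero k]
    (P Q : Polynomial (Polynomial k))
    (hP : P ≠ 0) (hQ : Q ≠ 0)
    (dx dy : ℕ) (hdy : 1 ≤ dy)
    (hPdx : degX P ≤ dx) (hQdx : degX Q ≤ dx)
    (hPdy : P.natDegree ≤ dy) (hQdy : Q.natDegree ≤ dy)
    (Dy : RatFunc (RatFunc k) → RatFunc (RatFunc k)) (hDy : IsDeriv Dy)
    (hDyval : ∀ A : Polynomial (RatFunc k), Dy (kyToF A) = kyToF (Polynomial.derivative A))
    (Dx : RatFunc (RatFunc k) → RatFunc (RatFunc k)) (hDx : IsDeriv Dx)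
    (hDxval : ∀ A : Polynomial (Polynomial k), Dx (toF A) = toF (derivX A))
    (κ ν : ℕ) (hκ : κ = 3 * dx * dy) (hν : ν = 6 * dy)
    (S : Finset (ℕ × ℕ × ℕ))
    (hS : S = (Finset.range (κ + 1) ×ˢ Finset.range (ν + 1) ×ˢ
      Finset.range (ν + 1)).filter fun w => w.1 ≤ κ ∧ w.2.1 + w.2.2 ≤ ν) :
    ∃ c : ℕ × ℕ × ℕ → k,
      (∃ w ∈ S, c w ≠ 0) ∧
      ∑ w ∈ S, toF (Polynomial.C (Polynomial.C (c w))) *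
        (toF (Polynomial.C Polynomial.X) ^ w.1 *
          Dx^[w.2.1] (Dy^[w.2.2] (toF P / toF Q))) = 0 :=
  stmt_18_general P Q hQ dx dy hdy hPdx hQdx hPdy hQdy Dy hDy hDyval Dx hDx hDxval κ ν hκ hν S hS
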